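/- arXiv:1602.00042 — 2 statements merged into one kernel-verified Lean document; each statement's English description precedes it below -/
import Mathlib

section
/- Let L>0, Ω=(0,L)×(-1,1), and let μ,ν,c₀,h>0 satisfy 2μc₀²h² ≤ ν/16 and μ ≥ 2ν. Let w₁ be a smooth Ω-periodic scalar function and let J be a square-integrable function on Ω satisfying the second-order approximation bound ‖J - w₁‖ ≤ c₀h(‖w₁‖² + ‖∇w₁‖²)^{1/2} + c₀²h²(‖w₁‖² + ‖∇w₁‖² + 2‖Δw₁‖²)^{1/2}. Then -μ∫_Ω J(x) w₁(x) dx ≤ (ν/4)‖∇w₁‖² - (3μ/4)‖w₁‖² + (ν/128)‖Δw₁‖². -/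
open MeasureTheory Real Filter

noncomputable section

/-- First partial derivative. -/
def d1 (f : ℝ × ℝ → ℝ) (p : ℝ × ℝ) : ℝ := fderiv ℝ f p (1, 0)

/-- Second partial derivative. -/
def d2 (f : ℝ × ℝ → ℝ) (p : ℝ × ℝ) : ℝ := fderiv ℝ f p (0, 1)

/-- Laplacian. -/
def lap (f : ℝ × ℝ → ℝ) (p : ℝ × ℝ) : ℝ := d1 (d1 f) p + d2 (d2 f) p

/-- The domain Ω = (0,L) × (-1,1). -/
def Omg (L : ℝ) : Set (ℝ × ℝ) := Set.Ioo 0 L ×ˢ Set.Ioo (-1) 1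

/-- Squared L² norm over Ω. -/
def nrmSq (L : ℝ) (f : ℝ × ℝ → ℝ) : ℝ := ∫ p in Omg L, (f p) ^ 2

/-- L² norm over Ω. -/
def nrm (L : ℝ) (f : ℝ × ℝ → ℝ) : ℝ := Real.sqrt (nrmSq L f)

/-- Squared L² norm of the gradient over Ω. -/
def gradNrmSq (L : ℝ) (f : ℝ × ℝ → ℝ) : ℝ := ∫ p in Omg L, ((d1 f p) ^ 2 + (d2 f p) ^ 2)

/-- L² norm of the gradient over Ω. -/
def gradNrm (L : ℝ) (f : ℝ × ℝ → ℝ) : ℝ := Real.sqrt (gradNrmSq L f)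

/-- Squared L² norm of the Laplacian over Ω. -/
def lapNrmSq (L : ℝ) (f : ℝ × ℝ → ℝ) : ℝ := ∫ p in Omg L, (lap f p) ^ 2

/-- L² norm of the Laplacian over Ω. -/
def lapNrm (L : ℝ) (f : ℝ × ℝ → ℝ) : ℝ := Real.sqrt (lapNrmSq L f)

/-- Ω-periodic: L-periodic in x₁ and 2-periodic in x₂. -/
def OmgPeriodic (L : ℝ) (f : ℝ × ℝ → ℝ) : Prop :=
  (∀ x y : ℝ, f (x + L, y) = f (x, y)) ∧ (∀ x y : ℝ, f (x, y + 2) = f (x, y))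

/-- Divergence-free vector field. -/
def DivFree (u₁ u₂ : ℝ × ℝ → ℝ) : Prop := ∀ p, d1 u₁ p + d2 u₂ p = 0

/-- Symmetric vector field: first component even in x₂, second odd in x₂. -/
def Symm (u₁ u₂ : ℝ × ℝ → ℝ) : Prop :=
  (∀ x y : ℝ, u₁ (x, -y) = u₁ (x, y)) ∧ (∀ x y : ℝ, u₂ (x, -y) = -u₂ (x, y))

/-! Write `(J, w₁) = (J - w₁, w₁) + ‖w₁‖²`. Cauchy–Schwarz and Young's inequality give
`-μ (J, w₁) ≤ μ (‖J - w₁‖ ‖w₁‖ - ‖w₁‖²) ≤ 2μ ‖J - w₁‖² - (7μ/8) ‖w₁‖²`, and squaring the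
approximation property gives `‖J - w₁‖² ≤ 2e ‖w₁‖²_{H¹} + 2e² ‖w₁‖²_{H²}` with `e = c₀²h²`.
The smallness condition `2μe ≤ ν/16` (which, with `μ ≥ 2ν`, also forces `e ≤ 1/64`) turns both
terms into multiples of `ν`, and `μ ≥ 2ν` absorbs the resulting `ν ‖w₁‖²` into `μ ‖w₁‖²/8`. -/

theorem integral_mul_le_sqrt_integral_sq_mul_sqrt_integral_sq {α : Type*} [MeasurableSpace α]
    {μ : Measure α} {f g : α → ℝ} (hf : MemLp f 2 μ) (hg : MemLp g 2 μ) :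
    ∫ x, f x * g x ∂μ ≤ √(∫ x, f x ^ 2 ∂μ) * √(∫ x, g x ^ 2 ∂μ) := by
  have holder := integral_mul_norm_le_Lp_mul_Lq Real.HolderConjugate.two_two
    (by simpa using hf) (by simpa using hg)
  simp only [Real.norm_eq_abs, Real.rpow_two, sq_abs, ← Real.sqrt_eq_rpow] at holder
  calc ∫ x, f x * g x ∂μ ≤ ‖∫ x, f x * g x ∂μ‖ := Real.le_norm_self _
    _ ≤ ∫ x, |f x| * |g x| ∂μ := by
      simpa only [norm_mul, Real.norm_eq_abs] using
        norm_integral_le_integral_norm (fun x => f x * g x)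
    _ ≤ _ := holder

theorem neg_integral_mul_le_sqrt_mul_sqrt_sub {α : Type*} [MeasurableSpace α]
    {μ : Measure α} {f g : α → ℝ} (hf : MemLp f 2 μ) (hg : MemLp g 2 μ) :
    -∫ x, f x * g x ∂μ ≤
      √(∫ x, (f x - g x) ^ 2 ∂μ) * √(∫ x, g x ^ 2 ∂μ) - ∫ x, g x ^ 2 ∂μ := by
  have hfg : MemLp (fun x => f x - g x) 2 μ := hf.sub hg
  have hsplit : ∫ x, f x * g x ∂μ = ∫ x, (f x - g x) * g x ∂μ + ∫ x, g x ^ 2 ∂μ := by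
    have hint : Integrable (fun x => (f x - g x) * g x) μ := hfg.integrable_mul hg
    rw [← integral_add hint hg.integrable_sq]
    exact integral_congr_ae (.of_forall fun x => by ring)
  have hcs := integral_mul_le_sqrt_integral_sq_mul_sqrt_integral_sq hfg.neg hg
  simp only [Pi.neg_apply, neg_sq, neg_mul, integral_neg] at hcs
  linarith

theorem Continuous.memLp_restrict_of_isBounded {X E : Type*} [MetricSpace X] [ProperSpace X]
    [MeasurableSpace X] [OpensMeasurableSpace X] [NormedAddCommGroup E] {μ : Measure X}
    [IsFiniteMeasureOnCompacts μ] {f : X → E} (hf : Continuous f) {s : Set X}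
    (hs : Bornology.IsBounded s) (p : ENNReal) : MemLp f p (μ.restrict s) := by
  have hK : IsCompact (closure s) := hs.isCompact_closure
  have : IsFiniteMeasure (μ.restrict (closure s)) := isFiniteMeasure_restrict.2 hK.measure_ne_top
  obtain ⟨C, hC⟩ := hK.exists_bound_of_continuousOn hf.continuousOn
  refine (MemLp.of_bound hf.aestronglyMeasurable C ?_).mono_measure
    (Measure.restrict_mono subset_closure le_rfl)
  exact ae_restrict_of_forall_mem isClosed_closure.measurableSet hC

theorem isBounded_Omg (L : ℝ) : Bornology.IsBounded (Omg L) :=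
  (Metric.isBounded_Ioo 0 L).prod (Metric.isBounded_Ioo (-1) 1)

theorem feedback_bound_of_sq_le {μ ν e A N G P : ℝ} (hμ : 0 < μ) (hμν : 2 * ν ≤ μ) (he : 0 ≤ e)
    (hcond : 2 * μ * e ≤ ν / 16) (hN : 0 ≤ N) (hG : 0 ≤ G) (hP : 0 ≤ P)
    (hA : A ^ 2 ≤ 2 * e * (N + G) + 2 * e ^ 2 * (N + G + 2 * P)) :
    μ * (A * √N - N) ≤ ν / 4 * G - 3 * μ / 4 * N + ν / 128 * P := by
  have hν : 0 ≤ ν := by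
    have : 0 ≤ 2 * μ * e := mul_nonneg (mul_nonneg zero_le_two hμ.le) he
    linarith
  have he_le : e ≤ 1 / 64 := le_of_mul_le_mul_left (by linarith) hμ
  have h4μe : 4 * μ * e ≤ ν / 8 := by linarith
  have h4μe2 : 4 * μ * e ^ 2 ≤ ν / 512 := by
    nlinarith [mul_le_mul_of_nonneg_left hcond he, mul_le_mul_of_nonneg_right he_le hν]
  have young : A * √N ≤ N / 8 + 2 * A ^ 2 := by
    nlinarith [sq_nonneg (√N - 4 * A), Real.sq_sqrt hN]
  have hμA : 2 * μ * A ^ 2 ≤ ν / 8 * (N + G) + ν / 512 * (N + G + 2 * P) :=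
    calc 2 * μ * A ^ 2 ≤ 2 * μ * (2 * e * (N + G) + 2 * e ^ 2 * (N + G + 2 * P)) := by gcongr
      _ = 4 * μ * e * (N + G) + 4 * μ * e ^ 2 * (N + G + 2 * P) := by ring
      _ ≤ ν / 8 * (N + G) + ν / 512 * (N + G + 2 * P) :=
        add_le_add (mul_le_mul_of_nonneg_right h4μe (by linarith))
          (mul_le_mul_of_nonneg_right h4μe2 (by linarith))
  calc μ * (A * √N - N) ≤ μ * (N / 8 + 2 * A ^ 2 - N) := by gcongr
    _ ≤ ν / 8 * (N + G) + ν / 512 * (N + G + 2 * P) - 7 * μ / 8 * N := by linarith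
    _ ≤ ν / 4 * G - 3 * μ / 4 * N + ν / 128 * P := by
      nlinarith [mul_le_mul_of_nonneg_right hμν hN, mul_nonneg hν hN, mul_nonneg hν hG,
        mul_nonneg hν hP]

theorem feedback_estimate_L2_second_order_general (L : ℝ) (μ ν c₀ h : ℝ)
    (hμ : 0 < μ)
    (hcond : 2 * μ * c₀ ^ 2 * h ^ 2 ≤ ν / 16) (hμν : 2 * ν ≤ μ)
    (w₁ J : ℝ × ℝ → ℝ) (hw₁ : ContDiff ℝ (⊤ : ℕ∞) w₁)
    (hJ : MemLp J 2 (volume.restrict (Omg L)))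
    (happrox : nrm L (fun p => J p - w₁ p) ≤
      c₀ * h * Real.sqrt (nrmSq L w₁ + gradNrmSq L w₁)
        + c₀ ^ 2 * h ^ 2 * Real.sqrt (nrmSq L w₁ + gradNrmSq L w₁ + 2 * lapNrmSq L w₁)) :
    -μ * ∫ p in Omg L, J p * w₁ p ≤
      ν / 4 * gradNrmSq L w₁ - 3 * μ / 4 * nrmSq L w₁ + ν / 128 * lapNrmSq L w₁ := by
  have hw : MemLp w₁ 2 (volume.restrict (Omg L)) :=
    hw₁.continuous.memLp_restrict_of_isBounded (isBounded_Omg L) 2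
  have hN : 0 ≤ nrmSq L w₁ := integral_nonneg fun p => sq_nonneg _
  have hG : 0 ≤ gradNrmSq L w₁ := integral_nonneg fun p => by positivity
  have hP : 0 ≤ lapNrmSq L w₁ := integral_nonneg fun p => sq_nonneg _
  have hA : nrm L (fun p => J p - w₁ p) ^ 2 ≤
      2 * (c₀ ^ 2 * h ^ 2) * (nrmSq L w₁ + gradNrmSq L w₁)
        + 2 * (c₀ ^ 2 * h ^ 2) ^ 2 * (nrmSq L w₁ + gradNrmSq L w₁ + 2 * lapNrmSq L w₁) := by
    refine (pow_le_pow_left₀ (Real.sqrt_nonneg _) happrox 2).trans (add_sq_le.trans_eq ?_)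
    simp only [mul_pow, Real.sq_sqrt (add_nonneg hN hG),
      Real.sq_sqrt (add_nonneg (add_nonneg hN hG) (mul_nonneg zero_le_two hP))]
    ring
  calc -μ * ∫ p in Omg L, J p * w₁ p = μ * -∫ p in Omg L, J p * w₁ p := by ring
    _ ≤ μ * (nrm L (fun p => J p - w₁ p) * √(nrmSq L w₁) - nrmSq L w₁) :=
        mul_le_mul_of_nonneg_left (neg_integral_mul_le_sqrt_mul_sqrt_sub hJ hw) hμ.le
    _ ≤ _ := feedback_bound_of_sq_le hμ hμν (by positivity) (by linarith) hN hG hP hA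

/-- estimate (3.35) of the paper for a second-order interpolant `J = I_h(w₁)`:
`-μ(I_h(w₁), w₁) ≤ (ν/4)‖∇w₁‖² - (3μ/4)‖w₁‖² + (ν/128)‖Δw₁‖²`. -/
theorem feedback_estimate_L2_second_order (L : ℝ) (hL : 0 < L) (μ ν c₀ h : ℝ)
    (hμ : 0 < μ) (hν : 0 < ν) (hc₀ : 0 < c₀) (hh : 0 < h)
    (hcond : 2 * μ * c₀ ^ 2 * h ^ 2 ≤ ν / 16) (hμν : 2 * ν ≤ μ)
    (w₁ J : ℝ × ℝ → ℝ) (hw₁ : ContDiff ℝ (⊤ : ℕ∞) w₁) (hpw₁ : OmgPeriodic L w₁)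
    (hJ : MemLp J 2 (volume.restrict (Omg L)))
    (happrox : nrm L (fun p => J p - w₁ p) ≤
      c₀ * h * Real.sqrt (nrmSq L w₁ + gradNrmSq L w₁)
        + c₀ ^ 2 * h ^ 2 * Real.sqrt (nrmSq L w₁ + gradNrmSq L w₁ + 2 * lapNrmSq L w₁)) :
    -μ * ∫ p in Omg L, J p * w₁ p ≤
      ν / 4 * gradNrmSq L w₁ - 3 * μ / 4 * nrmSq L w₁ + ν / 128 * lapNrmSq L w₁ :=
  feedback_estimate_L2_second_order_general L μ ν c₀ h hμ hcond hμν w₁ J hw₁ hJ happrox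
end
end

section
/- Let L>0, Ω=(0,L)×(-1,1), and let μ,ν,c₀,h>0 satisfy 2μc₀²h² ≤ ν/16 and μ ≥ 2ν. Let w₁ be a smooth Ω-periodic scalar function and let J be a square-integrable function on Ω satisfying the second-order approximation bound ‖J - w₁‖ ≤ c₀h(‖w₁‖² + ‖∇w₁‖²)^{1/2} + c₀²h²(‖w₁‖² + ‖∇w₁‖² + 2‖Δw₁‖²)^{1/2}. Then μ∫_Ω J(x) Δw₁(x) dx ≤ (3ν/8)‖Δw₁‖² + (μ/8)‖w₁‖² - (7μ/8)‖∇w₁‖². -/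
open MeasureTheory Real Filter

noncomputable section

/-! Split `∫ J Δw₁ = ∫ (J - w₁) Δw₁ + ∫ w₁ Δw₁`. By the divergence theorem, whose boundary terms
cancel by periodicity, the second integral is `-‖∇w₁‖²`. Cauchy–Schwarz and the approximation
property bound the first by `(c₀h‖w₁‖_{H¹} + c₀²h²‖w₁‖_{H²})‖Δw₁‖`, and Young's inequality with
`μc₀²h² ≤ ν/32` and `ν ≤ μ/2` absorbs this into `(μ/8)‖w₁‖_{H¹}² + (3ν/8)‖Δw₁‖²`. -/

lemma contDiff_d1 {n : WithTop ℕ∞} {f : ℝ × ℝ → ℝ} (hf : ContDiff ℝ (n + 1) f) :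
    ContDiff ℝ n (d1 f) :=
  (hf.fderiv_right le_rfl).clm_apply contDiff_const

lemma contDiff_d2 {n : WithTop ℕ∞} {f : ℝ × ℝ → ℝ} (hf : ContDiff ℝ (n + 1) f) :
    ContDiff ℝ n (d2 f) :=
  (hf.fderiv_right le_rfl).clm_apply contDiff_const

lemma continuous_lap {f : ℝ × ℝ → ℝ} (hf : ContDiff ℝ 2 f) : Continuous (lap f) :=
  (contDiff_d1 (n := 0) (contDiff_d1 (n := 1) hf)).continuous.add
    (contDiff_d2 (n := 0) (contDiff_d2 (n := 1) hf)).continuous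

lemma d1_mul {f g : ℝ × ℝ → ℝ} {p : ℝ × ℝ} (hf : DifferentiableAt ℝ f p)
    (hg : DifferentiableAt ℝ g p) : d1 (fun q => f q * g q) p = d1 f p * g p + f p * d1 g p := by
  simp only [d1, fderiv_fun_mul hf hg, _root_.add_apply, _root_.smul_apply, smul_eq_mul]
  ring

lemma d2_mul {f g : ℝ × ℝ → ℝ} {p : ℝ × ℝ} (hf : DifferentiableAt ℝ f p)
    (hg : DifferentiableAt ℝ g p) : d2 (fun q => f q * g q) p = d2 f p * g p + f p * d2 g p := by
  simp only [d2, fderiv_fun_mul hf hg, _root_.add_apply, _root_.smul_apply, smul_eq_mul]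
  ring

lemma fderiv_add_period {E F : Type*} [NormedAddCommGroup E] [NormedSpace ℝ E]
    [NormedAddCommGroup F] [NormedSpace ℝ F] {f : E → F} {a : E} (hf : ∀ x, f (x + a) = f x)
    (x : E) : fderiv ℝ f (x + a) = fderiv ℝ f x := by
  rw [← fderiv_comp_add_right, funext hf]

lemma OmgPeriodic.fderiv_apply {L : ℝ} {f : ℝ × ℝ → ℝ} (hf : OmgPeriodic L f) (v : ℝ × ℝ) :
    OmgPeriodic L (fun p => fderiv ℝ f p v) := by
  constructor <;> intro x y
  · have := fderiv_add_period (a := ((L, 0) : ℝ × ℝ))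
      (by rintro ⟨x', y'⟩; simpa using hf.1 x' y') (x, y)
    simp only [Prod.mk_add_mk, add_zero] at this
    simp only [this]
  · have := fderiv_add_period (a := ((0, 2) : ℝ × ℝ))
      (by rintro ⟨x', y'⟩; simpa using hf.2 x' y') (x, y)
    simp only [Prod.mk_add_mk, add_zero] at this
    simp only [this]

lemma OmgPeriodic.mul {L : ℝ} {f g : ℝ × ℝ → ℝ} (hf : OmgPeriodic L f) (hg : OmgPeriodic L g) :
    OmgPeriodic L (fun p => f p * g p) :=
  ⟨fun x y => by simp only [hf.1, hg.1], fun x y => by simp only [hf.2, hg.2]⟩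

lemma OmgPeriodic.apply_L_eq {L : ℝ} {f : ℝ × ℝ → ℝ} (hf : OmgPeriodic L f) (y : ℝ) :
    f (L, y) = f (0, y) := by
  simpa using hf.1 0 y

lemma OmgPeriodic.apply_one_eq {L : ℝ} {f : ℝ × ℝ → ℝ} (hf : OmgPeriodic L f) (x : ℝ) :
    f (x, 1) = f (x, -1) := by
  simpa [show (-1 : ℝ) + 2 = 1 by norm_num] using hf.2 x (-1)

lemma Omg_subset_Icc (L : ℝ) : Omg L ⊆ Set.Icc ((0 : ℝ), (-1 : ℝ)) (L, 1) := by
  rw [Set.Icc_prod_eq]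
  exact Set.prod_mono Set.Ioo_subset_Icc_self Set.Ioo_subset_Icc_self

lemma Omg_ae_eq_Icc (L : ℝ) : Omg L =ᵐ[volume] Set.Icc ((0 : ℝ), (-1 : ℝ)) (L, 1) := by
  rw [Set.Icc_prod_eq, Omg, Measure.volume_eq_prod]
  exact Measure.set_prod_ae_eq Ioo_ae_eq_Icc Ioo_ae_eq_Icc

lemma integrableOn_Omg {L : ℝ} {f : ℝ × ℝ → ℝ} (hf : Continuous f) :
    IntegrableOn f (Omg L) :=
  (hf.continuousOn.integrableOn_compact isCompact_Icc).mono_set (Omg_subset_Icc L)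

lemma memLp_two_Omg {L : ℝ} {f : ℝ × ℝ → ℝ} (hf : Continuous f) :
    MemLp f 2 (volume.restrict (Omg L)) :=
  (memLp_two_iff_integrable_sq hf.aestronglyMeasurable).2 (integrableOn_Omg (hf.pow 2))

theorem integral_Omg_d1_add_d2_eq_zero {L : ℝ} (hL : 0 ≤ L) {f g : ℝ × ℝ → ℝ}
    (hf : ContDiff ℝ 1 f) (hg : ContDiff ℝ 1 g)
    (hfL : ∀ y, f (L, y) = f (0, y)) (hg1 : ∀ x, g (x, 1) = g (x, -1)) :
    ∫ p in Omg L, (d1 f p + d2 g p) = 0 := by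
  have hdiv := integral_divergence_prod_Icc_of_hasFDerivAt_off_countable_of_le f g
    (fderiv ℝ f) (fderiv ℝ g) (0, -1) (L, 1) ⟨hL, by norm_num⟩ ∅ Set.countable_empty
    hf.continuous.continuousOn hg.continuous.continuousOn
    (fun p _ => (hf.differentiable one_ne_zero p).hasFDerivAt)
    (fun p _ => (hg.differentiable one_ne_zero p).hasFDerivAt)
    (((contDiff_d1 (n := 0) hf).continuous.add
      (contDiff_d2 (n := 0) hg).continuous).continuousOn.integrableOn_compact isCompact_Icc)
  simp only [hfL, hg1, sub_self, zero_add] at hdiv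
  rw [setIntegral_congr_set (Omg_ae_eq_Icc L)]
  exact hdiv

theorem integral_mul_lap_eq_neg_gradNrmSq {L : ℝ} (hL : 0 ≤ L) {w : ℝ × ℝ → ℝ}
    (hw : ContDiff ℝ 2 w) (hp : OmgPeriodic L w) :
    ∫ p in Omg L, w p * lap w p = -gradNrmSq L w := by
  have hw1 : ContDiff ℝ 1 (d1 w) := contDiff_d1 hw
  have hw2 : ContDiff ℝ 1 (d2 w) := contDiff_d2 hw
  have hdw : Differentiable ℝ w := hw.differentiable (by norm_num)
  have hp1 : OmgPeriodic L (fun p => w p * d1 w p) := hp.mul (hp.fderiv_apply (1, 0))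
  have hp2 : OmgPeriodic L (fun p => w p * d2 w p) := hp.mul (hp.fderiv_apply (0, 1))
  have hdiv := integral_Omg_d1_add_d2_eq_zero hL ((hw.of_le (by norm_num)).mul hw1)
    ((hw.of_le (by norm_num)).mul hw2) hp1.apply_L_eq hp2.apply_one_eq
  have hpointwise : ∀ p, d1 (fun q => w q * d1 w q) p + d2 (fun q => w q * d2 w q) p
      = w p * lap w p + (d1 w p ^ 2 + d2 w p ^ 2) := fun p => by
    rw [d1_mul (hdw p) (hw1.differentiable one_ne_zero p),
      d2_mul (hdw p) (hw2.differentiable one_ne_zero p), lap]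
    ring
  simp only [hpointwise] at hdiv
  have hint1 : IntegrableOn (fun p => w p * lap w p) (Omg L) :=
    integrableOn_Omg (hw.continuous.mul (continuous_lap hw))
  have hint2 : IntegrableOn (fun p => d1 w p ^ 2 + d2 w p ^ 2) (Omg L) :=
    integrableOn_Omg ((hw1.continuous.pow 2).add (hw2.continuous.pow 2))
  rw [integral_add hint1 hint2] at hdiv
  rw [gradNrmSq]
  linarith

theorem integral_mul_le_sqrt_mul_sqrt {α : Type*} [MeasurableSpace α] {μ : Measure α}
    {u v : α → ℝ} (hu : MemLp u 2 μ) (hv : MemLp v 2 μ) :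
    ∫ a, u a * v a ∂μ ≤ √(∫ a, u a ^ 2 ∂μ) * √(∫ a, v a ^ 2 ∂μ) := by
  have h2 : ENNReal.ofReal 2 = 2 := by norm_num
  have hH := integral_mul_norm_le_Lp_mul_Lq Real.HolderConjugate.two_two
    (h2 ▸ hu) (h2 ▸ hv)
  simp only [Real.norm_eq_abs, Real.rpow_two, sq_abs, ← Real.sqrt_eq_rpow] at hH
  calc ∫ a, u a * v a ∂μ ≤ |∫ a, u a * v a ∂μ| := le_abs_self _
    _ ≤ ∫ a, |u a * v a| ∂μ := abs_integral_le_integral_abs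
    _ ≤ _ := by simpa only [abs_mul] using hH

lemma young_feedback {μ ν a s t X : ℝ} (hμ : 0 ≤ μ) (hμa : μ * a ^ 2 ≤ ν / 32)
    (hμν : 2 * ν ≤ μ) (ht : t ^ 2 = s ^ 2 + 2 * X ^ 2) :
    μ * ((a * s + a ^ 2 * t) * X) ≤ μ / 8 * s ^ 2 + 3 * ν / 8 * X ^ 2 := by
  -- `a s X ≤ s² / 16 + 4 a² X²` and `a² t X ≤ a² (t² + X²) / 2`
  nlinarith [mul_nonneg hμ (sq_nonneg (s - 8 * a * X)),
    mul_nonneg (mul_nonneg hμ (sq_nonneg a)) (sq_nonneg (t - X)),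
    mul_nonneg hμ (sq_nonneg a), sq_nonneg s, sq_nonneg X]

lemma nrmSq_nonneg (L : ℝ) (f : ℝ × ℝ → ℝ) : 0 ≤ nrmSq L f :=
  integral_nonneg fun _ => sq_nonneg _

lemma gradNrmSq_nonneg (L : ℝ) (f : ℝ × ℝ → ℝ) : 0 ≤ gradNrmSq L f :=
  integral_nonneg fun _ => add_nonneg (sq_nonneg _) (sq_nonneg _)

lemma lapNrmSq_nonneg (L : ℝ) (f : ℝ × ℝ → ℝ) : 0 ≤ lapNrmSq L f :=
  integral_nonneg fun _ => sq_nonneg _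

theorem feedback_estimate_H1_second_order_general (L : ℝ) (hL : 0 < L) (μ ν c₀ h : ℝ)
    (hμ : 0 < μ)
    (hcond : 2 * μ * c₀ ^ 2 * h ^ 2 ≤ ν / 16) (hμν : 2 * ν ≤ μ)
    (w₁ J : ℝ × ℝ → ℝ) (hw₁ : ContDiff ℝ (⊤ : ℕ∞) w₁) (hpw₁ : OmgPeriodic L w₁)
    (hJ : MemLp J 2 (volume.restrict (Omg L)))
    (happrox : nrm L (fun p => J p - w₁ p) ≤
      c₀ * h * Real.sqrt (nrmSq L w₁ + gradNrmSq L w₁)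
        + c₀ ^ 2 * h ^ 2 * Real.sqrt (nrmSq L w₁ + gradNrmSq L w₁ + 2 * lapNrmSq L w₁)) :
    μ * ∫ p in Omg L, J p * lap w₁ p ≤
      3 * ν / 8 * lapNrmSq L w₁ + μ / 8 * nrmSq L w₁ - 7 * μ / 8 * gradNrmSq L w₁ := by
  have hw₂ : ContDiff ℝ 2 w₁ := hw₁.of_le (WithTop.coe_le_coe.2 le_top)
  have hlap : MemLp (lap w₁) 2 (volume.restrict (Omg L)) := memLp_two_Omg (continuous_lap hw₂)
  have herr : MemLp (fun p => J p - w₁ p) 2 (volume.restrict (Omg L)) :=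
    hJ.sub (memLp_two_Omg hw₁.continuous)
  have hsplit : ∫ p in Omg L, J p * lap w₁ p
      = (∫ p in Omg L, (J p - w₁ p) * lap w₁ p) + ∫ p in Omg L, w₁ p * lap w₁ p := by
    have hint_err : Integrable (fun p => (J p - w₁ p) * lap w₁ p) (volume.restrict (Omg L)) :=
      herr.integrable_mul hlap
    have hint_w : IntegrableOn (fun p => w₁ p * lap w₁ p) (Omg L) :=
      integrableOn_Omg (hw₁.continuous.mul (continuous_lap hw₂))
    rw [← integral_add hint_err hint_w]
    simp only [← add_mul, sub_add_cancel]
  have hN := nrmSq_nonneg L w₁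
  have hG := gradNrmSq_nonneg L w₁
  have hΛ := lapNrmSq_nonneg L w₁
  have herr_lap : ∫ p in Omg L, (J p - w₁ p) * lap w₁ p ≤
      (c₀ * h * √(nrmSq L w₁ + gradNrmSq L w₁)
        + (c₀ * h) ^ 2 * √(nrmSq L w₁ + gradNrmSq L w₁ + 2 * lapNrmSq L w₁)) * √(lapNrmSq L w₁) :=
    (integral_mul_le_sqrt_mul_sqrt herr hlap).trans
      (mul_le_mul_of_nonneg_right (by rw [mul_pow]; exact happrox) (sqrt_nonneg _))
  have hyoung := young_feedback hμ.le (a := c₀ * h) (s := √(nrmSq L w₁ + gradNrmSq L w₁))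
    (t := √(nrmSq L w₁ + gradNrmSq L w₁ + 2 * lapNrmSq L w₁)) (X := √(lapNrmSq L w₁))
    (by linarith) hμν
    (by rw [sq_sqrt (by positivity), sq_sqrt (by positivity), sq_sqrt (by positivity)])
  rw [sq_sqrt (by positivity), sq_sqrt (by positivity)] at hyoung
  rw [hsplit, integral_mul_lap_eq_neg_gradNrmSq hL.le hw₂ hpw₁]
  linarith [mul_le_mul_of_nonneg_left herr_lap hμ.le]

/-- estimate (3.36) of the paper for a second-order interpolant `J = I_h(w₁)`:
`μ(I_h(w₁), Δw₁) ≤ (3ν/8)‖Δw₁‖² + (μ/8)‖w₁‖² - (7μ/8)‖∇w₁‖²`. -/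
theorem feedback_estimate_H1_second_order (L : ℝ) (hL : 0 < L) (μ ν c₀ h : ℝ)
    (hμ : 0 < μ) (hν : 0 < ν) (hc₀ : 0 < c₀) (hh : 0 < h)
    (hcond : 2 * μ * c₀ ^ 2 * h ^ 2 ≤ ν / 16) (hμν : 2 * ν ≤ μ)
    (w₁ J : ℝ × ℝ → ℝ) (hw₁ : ContDiff ℝ (⊤ : ℕ∞) w₁) (hpw₁ : OmgPeriodic L w₁)
    (hJ : MemLp J 2 (volume.restrict (Omg L)))
    (happrox : nrm L (fun p => J p - w₁ p) ≤
      c₀ * h * Real.sqrt (nrmSq L w₁ + gradNrmSq L w₁)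
        + c₀ ^ 2 * h ^ 2 * Real.sqrt (nrmSq L w₁ + gradNrmSq L w₁ + 2 * lapNrmSq L w₁)) :
    μ * ∫ p in Omg L, J p * lap w₁ p ≤
      3 * ν / 8 * lapNrmSq L w₁ + μ / 8 * nrmSq L w₁ - 7 * μ / 8 * gradNrmSq L w₁ :=
  feedback_estimate_H1_second_order_general L hL μ ν c₀ h hμ hcond hμν w₁ J hw₁ hpw₁ hJ happrox
end
end
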